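/- arXiv:2306.07360 — 2 statements merged into one kernel-verified Lean document; each statement's English description precedes it below -/
import Mathlib

section
/- Let L be a complete modular lattice and φ : L → L a linear morphism. (1) If x ∈ L is essential in L, then w = ⨆{a ∈ L : φ(a) ≤ x} is essential in L. (2) If x ∈ L is superfluous in L, then φ(x) is superfluous in L. -/
section Preamble

variable {α β : Type*}

/-- A linear morphism between complete lattices: there is a kernel element `k` such that
`φ x = φ (x ⊔ k)` for all `x`, and `φ` restricts to an isomorphism of (complete) lattices
from the interval `[k, ⊤]` onto `[⊥, φ ⊤]`. -/
def IsLinMor [CompleteLattice α] [CompleteLattice β] (φ : α → β) : Prop :=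
  ∃ k : α, (∀ x, φ x = φ (x ⊔ k)) ∧
    ∃ e : Set.Icc k (⊤ : α) ≃o Set.Icc (⊥ : β) (φ ⊤),
      ∀ x : Set.Icc k (⊤ : α), (e x : β) = φ (x : α)

/-- The kernel of a linear morphism: the largest element sent to `⊥`. -/
noncomputable def linKer [CompleteLattice α] [CompleteLattice β] (φ : α → β) : α :=
  sSup {a | φ a = ⊥}

/-- A submonoid with zero of the monoid of linear endomorphisms of `α`. -/
structure IsLinSubmonoid [CompleteLattice α] (M : Set (α → α)) : Prop where
  lin_mem : ∀ φ ∈ M, IsLinMor φ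
  id_mem : (id : α → α) ∈ M
  zero_mem : (fun _ : α => (⊥ : α)) ∈ M
  comp_mem : ∀ φ ∈ M, ∀ ψ ∈ M, φ ∘ ψ ∈ M

/-- The projection onto `x` along a complement `x'`. -/
def proj [CompleteLattice α] (x x' : α) : α → α := fun a => (a ⊔ x') ⊓ x

/-- `M` is closed under complements: whenever `φ ∈ M` restricts to a linear isomorphism
`[⊥, x] → [⊥, y]` with `x, y` complemented, the composite `ι_x ∘ (φ|_x)⁻¹ ∘ π_y` is in `M`. -/
def ClosedUnderComplements [CompleteLattice α] (M : Set (α → α)) : Prop :=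
  ∀ φ ∈ M, ∀ x x' y y' : α, IsCompl x x' → IsCompl y y' →
    ∀ e : Set.Icc (⊥ : α) x ≃o Set.Icc (⊥ : α) y,
      (∀ a : Set.Icc (⊥ : α) x, ((e a : Set.Icc (⊥ : α) y) : α) = φ (a : α)) →
      (fun a : α =>
        ((e.symm ⟨(a ⊔ y') ⊓ y, bot_le, inf_le_right⟩ : Set.Icc (⊥ : α) x) : α)) ∈ M

/-- `L` is `M`-endoregular: `M` is a regular monoid. -/
def MEndoregular [CompleteLattice α] (M : Set (α → α)) : Prop :=
  ∀ φ ∈ M, ∃ ψ ∈ M, φ ∘ ψ ∘ φ = φ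

/-- `L` is `M`-Rickart: kernels of members of `M` have complements. -/
def MRickart [CompleteLattice α] (M : Set (α → α)) : Prop :=
  ∀ φ ∈ M, ∃ y, IsCompl (linKer φ) y

/-- `L` is dual-`M`-Rickart: images of members of `M` have complements. -/
def MDualRickart [CompleteLattice α] (M : Set (α → α)) : Prop :=
  ∀ φ ∈ M, ∃ y, IsCompl (φ ⊤) y

/-- The `M`-C2 condition. -/
def MC2 [CompleteLattice α] (M : Set (α → α)) : Prop :=
  ∀ a x x' : α, IsCompl x x' →
    ∀ e : Set.Icc (⊥ : α) x ≃o Set.Icc (⊥ : α) a,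
      ((fun b : α =>
          ((e ⟨(b ⊔ x') ⊓ x, bot_le, inf_le_right⟩ : Set.Icc (⊥ : α) a) : α)) ∈ M) →
      ∃ a', IsCompl a a'

/-- The `M`-D2 condition. -/
def MD2 [CompleteLattice α] (M : Set (α → α)) : Prop :=
  ∀ a x : α, (∃ x', IsCompl x x') →
    ∀ e : Set.Icc a (⊤ : α) ≃o Set.Icc (⊥ : α) x,
      ((fun b : α => ((e ⟨a ⊔ b, le_sup_left, le_top⟩ : Set.Icc (⊥ : α) x) : α)) ∈ M) →
      ∃ a', IsCompl a a'

/-- `L` is `M`-abelian: every idempotent of `M` is central in `M`. -/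
def MAbelian [CompleteLattice α] (M : Set (α → α)) : Prop :=
  ∀ ε ∈ M, ε ∘ ε = ε → ∀ φ ∈ M, ε ∘ φ = φ ∘ ε

/-- `a` is `M`-`L`-generated: it is a join of images of linear morphisms `L → [⊥, a]`
whose composites with the inclusion `ι_a` lie in `M`. -/
def MGenerated [CompleteLattice α] (M : Set (α → α)) (a : α) : Prop :=
  ∃ S : Set (α → α), S ⊆ M ∧ (∀ f ∈ S, ∀ x, f x ≤ a) ∧ (⨆ f ∈ S, f ⊤) = a

/-- A complete lattice is compact if every join representation of `⊤` has a finite subjoin. -/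
def CompactLat (α : Type*) [CompleteLattice α] : Prop :=
  ∀ s : Set α, sSup s = ⊤ → ∃ t : Finset α, ↑t ⊆ s ∧ sSup (↑t : Set α) = ⊤

/-- An element `c` is compact if the interval `[⊥, c]` is a compact lattice. -/
def CompactElt [CompleteLattice α] (c : α) : Prop :=
  ∀ s : Set α, (∀ a ∈ s, a ≤ c) → sSup s = c →
    ∃ t : Finset α, ↑t ⊆ s ∧ sSup (↑t : Set α) = c

/-- `x` is essential in `L`. -/
def Essential [CompleteLattice α] (x : α) : Prop := ∀ y, x ⊓ y = ⊥ → y = ⊥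

/-- `x` is essential in the interval `[⊥, c]`. -/
def EssentialIn [CompleteLattice α] (x c : α) : Prop :=
  x ≤ c ∧ ∀ y ≤ c, x ⊓ y = ⊥ → y = ⊥

/-- `x` is superfluous in `L`. -/
def Superfluous [CompleteLattice α] (x : α) : Prop := ∀ y, x ⊔ y = ⊤ → y = ⊤

/-- `x` is superfluous in the interval `[⊥, c]`. -/
def SuperfluousIn [CompleteLattice α] (x c : α) : Prop :=
  x ≤ c ∧ ∀ y ≤ c, x ⊔ y = c → y = c

/-- `M` contains all the projections. -/
def ContainsProjections [CompleteLattice α] (M : Set (α → α)) : Prop :=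
  ∀ x x' : α, IsCompl x x' → proj x x' ∈ M

/-- `L` is `M`-K-extending. -/
def MKExtending [CompleteLattice α] (M : Set (α → α)) : Prop :=
  ∀ φ ∈ M, ∃ c : α, (∃ c', IsCompl c c') ∧ EssentialIn (linKer φ) c

/-- `L` is `M`-K-nonsingular. -/
def MKNonsingular [CompleteLattice α] (M : Set (α → α)) : Prop :=
  ∀ φ ∈ M, Essential (linKer φ) → φ = fun _ => (⊥ : α)

/-- `L` is `M`-T-lifting. -/
def MTLifting [CompleteLattice α] (M : Set (α → α)) : Prop :=
  ∀ φ ∈ M, ∃ c c' : α, IsCompl c c' ∧ c ≤ φ ⊤ ∧ SuperfluousIn (φ ⊤ ⊓ c') c'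

end Preamble

/-!
A linear morphism `φ` with kernel `k` is a left adjoint: its right adjoint sends `c` to the
preimage `sSup {a | φ a ≤ c}`, the element of `[k, ⊤]` corresponding to `c ⊓ φ ⊤`, and
`φ a ≤ φ b ↔ a ≤ b ⊔ k`. With this dictionary, modularity transports `w ⊓ y = ⊥` (for `w` the
preimage of `x`) to `x ⊓ φ y = ⊥`, and `φ x ⊔ y = ⊤` to `x ⊔ k ⊔ preimage y = ⊤`.
-/

section LinearMorphism

variable {α β : Type*} [CompleteLattice α] [CompleteLattice β]

def IsLinMorKer (φ : α → β) (k : α) : Prop :=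
  (∀ x, φ x = φ (x ⊔ k)) ∧
    ∃ e : Set.Icc k (⊤ : α) ≃o Set.Icc (⊥ : β) (φ ⊤),
      ∀ x : Set.Icc k (⊤ : α), (e x : β) = φ (x : α)

theorem isLinMor_iff_exists_isLinMorKer {φ : α → β} : IsLinMor φ ↔ ∃ k, IsLinMorKer φ k :=
  Iff.rfl

namespace IsLinMorKer

variable {φ : α → β} {k : α} (h : IsLinMorKer φ k)
include h

theorem map_sup_ker (a : α) : φ (a ⊔ k) = φ a := (h.1 a).symm

theorem map_le_map_iff_of_ker_le {a b : α} (ha : k ≤ a) (hb : k ≤ b) : φ a ≤ φ b ↔ a ≤ b := by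
  obtain ⟨-, e, he⟩ := h
  rw [← he ⟨a, ha, le_top⟩, ← he ⟨b, hb, le_top⟩, Subtype.coe_le_coe, e.le_iff_le]
  exact Iff.rfl

theorem exists_ker_le_map_eq {c : β} (hc : c ≤ φ ⊤) : ∃ b, k ≤ b ∧ φ b = c := by
  obtain ⟨-, e, he⟩ := h
  exact ⟨e.symm ⟨c, bot_le, hc⟩, (e.symm _).2.1, by rw [← he, e.apply_symm_apply]⟩

theorem map_le_map_iff {a b : α} : φ a ≤ φ b ↔ a ≤ b ⊔ k := by
  rw [← h.map_sup_ker a, ← h.map_sup_ker b,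
    h.map_le_map_iff_of_ker_le le_sup_right le_sup_right, sup_le_iff, and_iff_left le_sup_right]

theorem monotone : Monotone φ := fun _ _ hab => h.map_le_map_iff.2 (le_sup_of_le_left hab)

theorem gc : GaloisConnection φ (fun c => sSup {a | φ a ≤ c}) := by
  refine fun a c => ⟨fun hac => le_sSup hac, fun ha => ?_⟩
  obtain ⟨b, hkb, hb⟩ := h.exists_ker_le_map_eq (inf_le_right : c ⊓ φ ⊤ ≤ φ ⊤)
  have hle_b : sSup {a | φ a ≤ c} ≤ b := sSup_le fun a' ha' => by
    rw [← sup_eq_left.2 hkb, ← h.map_le_map_iff, hb]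
    exact le_inf ha' (h.monotone le_top)
  exact (h.monotone (ha.trans hle_b)).trans (hb ▸ inf_le_left)

theorem map_sSup_setOf_map_le (c : β) : φ (sSup {a | φ a ≤ c}) = c ⊓ φ ⊤ := by
  refine le_antisymm (le_inf (h.gc.l_u_le c) (h.monotone le_top)) ?_
  obtain ⟨b, -, hb⟩ := h.exists_ker_le_map_eq (inf_le_right : c ⊓ φ ⊤ ≤ φ ⊤)
  exact hb ▸ h.monotone ((h.gc _ _).1 (hb ▸ inf_le_left))

theorem map_eq_bot_iff {a : α} : φ a = ⊥ ↔ a ≤ k := by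
  rw [← le_bot_iff, ← h.gc.l_bot, h.map_le_map_iff, bot_sup_eq]

theorem essential_sSup_setOf_map_le [IsModularLattice α] {x : β} (hx : Essential x) :
    Essential (sSup {a | φ a ≤ x}) := by
  set w := sSup {a | φ a ≤ x}
  have hkw : k ≤ w := (h.gc _ _).1 ((h.map_eq_bot_iff.2 le_rfl).symm ▸ bot_le)
  intro y hy
  have hxy : x ⊓ φ y = ⊥ := by
    obtain ⟨b, -, hb⟩ := h.exists_ker_le_map_eq (inf_le_right.trans (h.monotone le_top))
    have hbw : b ≤ w := (h.gc _ _).1 (hb ▸ inf_le_left)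
    have hby : b ≤ k ⊔ y := sup_comm y k ▸ h.map_le_map_iff.1 (hb ▸ inf_le_right)
    -- modularity: `(k ⊔ y) ⊓ w = k ⊔ y ⊓ w = k`
    have hbk : b ≤ k := by
      simpa only [sup_inf_assoc_of_le y hkw, inf_comm y w, hy, sup_bot_eq] using le_inf hby hbw
    rw [← hb]
    exact h.map_eq_bot_iff.2 hbk
  rwa [inf_eq_right.2 ((h.map_eq_bot_iff.1 (hx _ hxy)).trans hkw)] at hy

theorem superfluous_map [IsModularLattice β] {x : α} (hx : Superfluous x) :
    Superfluous (φ x) := by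
  intro y hy
  set b := sSup {a | φ a ≤ y}
  have htop : φ ⊤ = φ (x ⊔ b) := calc
    φ ⊤ = φ x ⊔ y ⊓ φ ⊤ := by
      rw [← sup_inf_assoc_of_le y (h.monotone le_top), hy, top_inf_eq]
    _ = φ (x ⊔ b) := by rw [h.gc.l_sup, h.map_sSup_setOf_map_le]
  have hbk : b ⊔ k = ⊤ :=
    hx _ (by simpa only [top_le_iff, sup_assoc] using h.map_le_map_iff.1 htop.le)
  have hφy : φ ⊤ ≤ y := by
    rw [← hbk, h.map_sup_ker]
    exact h.gc.l_u_le y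
  rw [← hy, sup_eq_right.2 ((h.monotone le_top).trans hφy)]

end IsLinMorKer

end LinearMorphism

/-- For a linear endomorphism `φ` of a complete modular lattice:
(1) if `x` is essential then `⨆ {a | φ a ≤ x}` is essential;
(2) if `x` is superfluous then `φ x` is superfluous. -/
theorem stmt_16 {α : Type*} [CompleteLattice α] [IsModularLattice α]
    (φ : α → α) (hφ : IsLinMor φ) :
    (∀ x : α, Essential x → Essential (sSup {a : α | φ a ≤ x})) ∧
    (∀ x : α, Superfluous x → Superfluous (φ x)) := by
  
  obtain ⟨k, hk⟩ := isLinMor_iff_exists_isLinMorKer.1 hφ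
  exact ⟨fun _ hx => hk.essential_sSup_setOf_map_le hx, fun _ hx => hk.superfluous_map hx⟩
end

section
/- Let L be a complete modular lattice and 𝔪 a submonoid with zero of End_lin(L) that is closed under complements. If L is 𝔪-K-extending and satisfies the 𝔪-C2 condition, then the quotient monoid 𝔪/≡_Δ is regular; concretely, for every φ ∈ 𝔪 there exist ψ ∈ 𝔪 and an essential element x ∈ L such that (φ ∘ ψ ∘ φ)(y) = φ(y) for all y ≤ x. -/
/-
A linear morphism `φ` with kernel `k` restricts to an isomorphism `[⊥, c'] ≃ [⊥, φ c']` whenever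
`k ⊓ c' = ⊥`. K-extending gives a complemented `c` in which `k` is essential; take `c'` a complement
of `c`. Composed with the projection onto `c'`, this isomorphism has the shape required by `M`-C2,
so `φ c'` has a complement `a'`, and closure under complements puts
`ψ = ι_{c'} ∘ (φ|_{c'})⁻¹ ∘ π_{φ c'}` into `M`. Then `φ ψ φ` agrees with `φ` below `k ⊔ c'`, which
is essential by modularity.
-/

namespace IsLinMor

variable {α β : Type*} [CompleteLattice α] [CompleteLattice β] {φ : α → β}

theorem map_le_map_iff_of_kernel {k : α} (hk : ∀ x, φ x = φ (x ⊔ k))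
    (e : Set.Icc k (⊤ : α) ≃o Set.Icc (⊥ : β) (φ ⊤)) (he : ∀ x, (e x : β) = φ x) (x y : α) :
    φ x ≤ φ y ↔ x ⊔ k ≤ y ⊔ k := by
  rw [hk x, hk y, ← he ⟨x ⊔ k, le_sup_right, le_top⟩, ← he ⟨y ⊔ k, le_sup_right, le_top⟩]
  exact e.le_iff_le

theorem linKer_eq_of_kernel {k : α} (hk : ∀ x, φ x = φ (x ⊔ k))
    (e : Set.Icc k (⊤ : α) ≃o Set.Icc (⊥ : β) (φ ⊤)) (he : ∀ x, (e x : β) = φ x) :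
    linKer φ = k := by
  have hiff := map_le_map_iff_of_kernel hk e he
  have hφk : φ k = ⊥ := by
    set w := e.symm ⟨⊥, le_rfl, bot_le⟩
    have hw : φ w = ⊥ := by rw [← he, e.apply_symm_apply]
    exact le_bot_iff.1 (hw ▸ (hiff k w).2 (sup_le (w.2.1.trans le_sup_left) le_sup_right))
  refine le_antisymm (sSup_le fun a ha => ?_) (le_sSup hφk)
  have hle : a ⊔ k ≤ k ⊔ k := (hiff a k).1 (le_of_eq (ha.trans hφk.symm))
  exact le_sup_left.trans (hle.trans (sup_idem k).le)

theorem map_sup_linKer (h : IsLinMor φ) (x : α) : φ (x ⊔ linKer φ) = φ x := by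
  obtain ⟨k, hk, e, he⟩ := h
  rw [linKer_eq_of_kernel hk e he, ← hk]

theorem map_le_map_iff (h : IsLinMor φ) {x y : α} :
    φ x ≤ φ y ↔ x ⊔ linKer φ ≤ y ⊔ linKer φ := by
  obtain ⟨k, hk, e, he⟩ := h
  rw [linKer_eq_of_kernel hk e he]
  exact map_le_map_iff_of_kernel hk e he x y

theorem exists_map_eq (h : IsLinMor φ) {b : β} (hb : b ≤ φ ⊤) : ∃ x, φ x = b := by
  obtain ⟨k, -, e, he⟩ := h
  exact ⟨e.symm ⟨b, bot_le, hb⟩, by rw [← he, e.apply_symm_apply]⟩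

theorem exists_orderIso_of_disjoint [IsModularLattice α] (h : IsLinMor φ) {c : α}
    (hc : Disjoint (linKer φ) c) :
    ∃ e : Set.Icc (⊥ : α) c ≃o Set.Icc (⊥ : β) (φ c), ∀ z, (e z : β) = φ z := by
  set k := linKer φ
  have hmono : Monotone φ := fun x y hxy => h.map_le_map_iff.2 (sup_le_sup_right hxy k)
  have hretract : ∀ z ≤ c, (z ⊔ k) ⊓ c = z := fun z hz => by
    rw [sup_inf_assoc_of_le k hz, hc.eq_bot, sup_bot_eq]
  let F : Set.Icc (⊥ : α) c ↪o Set.Icc (⊥ : β) (φ c) :=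
    OrderEmbedding.ofMapLEIff (fun z => ⟨φ z, bot_le, hmono z.2.2⟩) fun z z' => by
      change φ z ≤ φ z' ↔ (z : α) ≤ z'
      refine h.map_le_map_iff.trans ⟨fun hle => ?_, fun hle => sup_le_sup_right hle k⟩
      rw [← hretract z z.2.2, ← hretract z' z'.2.2]
      exact inf_le_inf_right c hle
  have hF : Function.Surjective F := by
    rintro ⟨b, -, hb⟩
    obtain ⟨x, rfl⟩ := h.exists_map_eq (hb.trans (hmono le_top))
    have hxc : x ⊔ k ≤ c ⊔ k := h.map_le_map_iff.1 hb
    refine ⟨⟨(x ⊔ k) ⊓ c, bot_le, inf_le_right⟩, Subtype.ext ?_⟩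
    change φ ((x ⊔ k) ⊓ c) = φ x
    rw [← h.map_sup_linKer, inf_sup_assoc_of_le c le_sup_right,
      inf_eq_left.2 hxc, h.map_sup_linKer]
  exact ⟨OrderIso.ofSurjective F hF, fun _ => rfl⟩

end IsLinMor

theorem ClosedUnderComplements.proj_mem {α : Type*} [CompleteLattice α] {M : Set (α → α)}
    (hM : ClosedUnderComplements M) (hid : id ∈ M) {x x' : α} (h : IsCompl x x') :
    proj x x' ∈ M :=
  hM id hid x x' x x' h h (OrderIso.refl _) fun _ => rfl

theorem essential_sup_of_isCompl {α : Type*} [CompleteLattice α] [IsModularLattice α]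
    {k c c' : α} (hcc' : IsCompl c c') (hk : EssentialIn k c) : Essential (k ⊔ c') := by
  intro w hw
  have hkc' : Disjoint k c' := hcc'.disjoint.mono_left hk.1
  have hk_c'w : Disjoint k (c' ⊔ w) :=
    hkc'.disjoint_sup_right_of_disjoint_sup_left (disjoint_iff.2 hw)
  have hc_c'w : c ⊓ (c' ⊔ w) = ⊥ :=
    hk.2 _ inf_le_left (disjoint_iff.1 (hk_c'w.mono_right inf_le_right))
  have hwc' : c' ⊔ w = c' := by
    have := sup_inf_assoc_of_le c (le_sup_left : c' ≤ c' ⊔ w)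
    rwa [sup_comm c' c, hcc'.sup_eq_top, top_inf_eq, hc_c'w, sup_bot_eq] at this
  exact (disjoint_iff.2 hw).eq_bot_of_ge ((le_sup_right.trans hwc'.le).trans le_sup_right)

/-- If `L` is `M`-K-extending and satisfies `M`-C2, then `M/≡_Δ` is a regular
monoid: for every `φ ∈ M` there exist `ψ ∈ M` and an essential `x` with
`(φ ∘ ψ ∘ φ) y = φ y` for all `y ≤ x`. -/
theorem stmt_18 {α : Type*} [CompleteLattice α] [IsModularLattice α]
    (M : Set (α → α)) (hM : IsLinSubmonoid M) (hcc : ClosedUnderComplements M)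
    (hke : MKExtending M) (hc2 : MC2 M) :
    ∀ φ ∈ M, ∃ ψ ∈ M, ∃ x : α, Essential x ∧ ∀ y ≤ x, φ (ψ (φ y)) = φ y := by
  intro φ hφ
  have hlin := hM.lin_mem φ hφ
  obtain ⟨c, ⟨c', hcc'⟩, hker⟩ := hke φ hφ
  obtain ⟨e, he⟩ := hlin.exists_orderIso_of_disjoint (hcc'.disjoint.mono_left hker.1)
  have hπ : φ ∘ proj c' c ∈ M := hM.comp_mem φ hφ _ (hcc.proj_mem hM.id_mem hcc'.symm)
  obtain ⟨a', ha'⟩ := hc2 (φ c') c' c hcc'.symm e <| by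
    convert hπ using 1
    exact funext fun _ => he _
  refine ⟨_, hcc φ hφ c' c (φ c') a' hcc'.symm ha' e he, linKer φ ⊔ c',
    essential_sup_of_isCompl hcc' hker, fun y hy => ?_⟩
  have hφy : φ y ≤ φ c' :=
    hlin.map_le_map_iff.2 (sup_le (hy.trans (sup_comm _ _).le) le_sup_right)
  have hproj : (φ y ⊔ a') ⊓ φ c' = φ y := by
    rw [sup_inf_assoc_of_le a' hφy, ha'.symm.inf_eq_bot, sup_bot_eq]
  simp only [← he, OrderIso.apply_symm_apply, hproj]
end
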